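/- Let T > 0 and let (u^ε, B^ε, E^ε) be smooth solutions of the Navier–Stokes–Maxwell system satisfying a uniform-in-ε bound sup_{t∈[0,T)}(‖u^ε‖_{H¹} + ‖B^ε‖_{H¹}) ≤ C together with the energy dissipation bound ∫₀ᵀ‖j^ε‖_{L²}² dt ≤ C from the basic energy identity and the first-order differential inequality d/dt 𝓔₁ + 𝓓₁ ≤ 0 with uniformly bounded 𝓔₁(0). Then, uniformly in ε: ε ∫₀ᵀ ‖∂ₜB^ε(t)‖_{L²}² dt ≤ C' and ∫₀ᵀ ‖E^ε(t)‖_{L²}² dt ≤ C' for some constant C' independent of ε. -/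

import Mathlib

noncomputable section

open MeasureTheory Real Set Filter Topology Function

/-- A point of the plane `ℝ²` (the 2D torus is `ℝ²` modulo the lattice `2πℤ²`). -/
abbrev Pt : Type := Fin 2 → ℝ

/-- The fundamental domain `[0, 2π]²` of the 2D torus. -/
def box : Set Pt := Set.Icc (fun _ => (0 : ℝ)) (fun _ => 2 * π)

/-- Partial derivative in the `k`-th coordinate direction. -/
def pd {α : Type*} [NormedAddCommGroup α] [NormedSpace ℝ α]
    (k : Fin 2) (f : Pt → α) (x : Pt) : α :=
  fderiv ℝ f x (Pi.single k 1)

/-- Time derivative (one-sided at `t = 0`). -/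
def dt {α : Type*} [NormedAddCommGroup α] [NormedSpace ℝ α]
    (f : ℝ → Pt → α) (t : ℝ) (x : Pt) : α :=
  derivWithin (fun s => f s x) (Set.Ici 0) t

/-- Second time derivative. -/
def dt2 {α : Type*} [NormedAddCommGroup α] [NormedSpace ℝ α]
    (f : ℝ → Pt → α) (t : ℝ) (x : Pt) : α :=
  derivWithin (fun s => dt f s x) (Set.Ici 0) t

/-- Time derivative of the `k`-th spatial partial derivative. -/
def dtpd {α : Type*} [NormedAddCommGroup α] [NormedSpace ℝ α]
    (k : Fin 2) (f : ℝ → Pt → α) (t : ℝ) (x : Pt) : α :=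
  derivWithin (fun s => pd k (f s) x) (Set.Ici 0) t

/-- The 2D Laplacian. -/
def lap {α : Type*} [NormedAddCommGroup α] [NormedSpace ℝ α]
    (f : Pt → α) (x : Pt) : α :=
  pd 0 (pd 0 f) x + pd 1 (pd 1 f) x

/-- `2π`-periodicity in each of the two space variables. -/
def Per {α : Type*} (f : Pt → α) : Prop :=
  ∀ (x : Pt) (k : Fin 2), f (x + Pi.single k (2 * π)) = f x

/-- Smoothness of a function on the torus. -/
def SmoothT2 {α : Type*} [NormedAddCommGroup α] [NormedSpace ℝ α] (f : Pt → α) : Prop :=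
  ContDiff ℝ (⊤ : ℕ∞) f

/-- Smoothness of a time dependent field on `𝕋² × [0,T)`. -/
def SmoothOnT {α : Type*} [NormedAddCommGroup α] [NormedSpace ℝ α]
    (T : ℝ) (f : ℝ → Pt → α) : Prop :=
  ContDiffOn ℝ (⊤ : ℕ∞) (uncurry f) (Set.Ico (0 : ℝ) T ×ˢ Set.univ)

/-- Squared Euclidean norm of a vector. -/
def nsq {m : ℕ} (v : Fin m → ℝ) : ℝ := ∑ i, v i ^ 2

/-- Euclidean scalar product. -/
def dot {m : ℕ} (a b : Fin m → ℝ) : ℝ := ∑ i, a i * b i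

/-- Cross product in `ℝ³`. -/
def cross (a b : Fin 3 → ℝ) : Fin 3 → ℝ :=
  ![a 1 * b 2 - a 2 * b 1, a 2 * b 0 - a 0 * b 2, a 0 * b 1 - a 1 * b 0]

/-- Squared `L²(𝕋²)` norm. -/
def L2sq {m : ℕ} (f : Pt → Fin m → ℝ) : ℝ := ∫ x in box, nsq (f x)

/-- `L^∞(𝕋²)` norm. -/
def Linf {m : ℕ} (f : Pt → Fin m → ℝ) : ℝ := ⨆ x : Pt, Real.sqrt (nsq (f x))

/-- Pointwise squared norm of the (spatial) gradient. -/
def gsq {m : ℕ} (f : Pt → Fin m → ℝ) (x : Pt) : ℝ := nsq (pd 0 f x) + nsq (pd 1 f x)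

/-- Squared `L²(𝕋²)` norm of the gradient. -/
def L2gsq {m : ℕ} (f : Pt → Fin m → ℝ) : ℝ := ∫ x in box, gsq f x

/-- Squared `L²(𝕋²)` norm of the Laplacian. -/
def L2lap {m : ℕ} (f : Pt → Fin m → ℝ) : ℝ := ∫ x in box, nsq (lap f x)

/-- Zero mean over the torus. -/
def ZeroMean {m : ℕ} (f : Pt → Fin m → ℝ) : Prop := (∫ x in box, f x) = 0

/-- 2D divergence of a planar vector field. -/
def div2 (f : Pt → Fin 2 → ℝ) (x : Pt) : ℝ := pd 0 f x 0 + pd 1 f x 1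

/-- Divergence of an `ℝ³`-valued field depending only on the two space variables. -/
def div3 (f : Pt → Fin 3 → ℝ) (x : Pt) : ℝ := pd 0 f x 0 + pd 1 f x 1

/-- Curl of an `ℝ³`-valued field depending only on the two space variables. -/
def curl2 (f : Pt → Fin 3 → ℝ) (x : Pt) : Fin 3 → ℝ :=
  ![pd 1 f x 2, -(pd 0 f x 2), pd 0 f x 1 - pd 1 f x 0]

/-- Planar gradient of a scalar field. -/
def grad2 (p : Pt → ℝ) (x : Pt) : Fin 2 → ℝ := ![pd 0 p x, pd 1 p x]

/-- Gradient of a scalar field viewed as a vector of `ℝ³`. -/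
def grad3 (p : Pt → ℝ) (x : Pt) : Fin 3 → ℝ := ![pd 0 p x, pd 1 p x, 0]

/-- Advection `(a·∇)b` by a planar field. -/
def adv2 {α : Type*} [NormedAddCommGroup α] [NormedSpace ℝ α]
    (a : Pt → Fin 2 → ℝ) (b : Pt → α) (x : Pt) : α :=
  a x 0 • pd 0 b x + a x 1 • pd 1 b x

/-- Advection `(a·∇)b` by an `ℝ³`-valued field depending only on the two space
variables (the third component does not act since `∂₃ = 0`). -/
def adv3 {α : Type*} [NormedAddCommGroup α] [NormedSpace ℝ α]
    (a : Pt → Fin 3 → ℝ) (b : Pt → α) (x : Pt) : α :=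
  a x 0 • pd 0 b x + a x 1 • pd 1 b x

/-- The current density `j = E + u × B`. -/
def jcur (u B E : ℝ → Pt → Fin 3 → ℝ) (t : ℝ) (x : Pt) : Fin 3 → ℝ :=
  E t x + cross (u t x) (B t x)

/-- `(u, B, E, q)` is a smooth periodic solution of the `ε`-dependent
Navier–Stokes–Maxwell system on `𝕋² × (0, T)`. -/
def IsNSM (ε T : ℝ) (u B E : ℝ → Pt → Fin 3 → ℝ) (q : ℝ → Pt → ℝ) : Prop :=
  SmoothOnT T u ∧ SmoothOnT T B ∧ SmoothOnT T E ∧ SmoothOnT T q ∧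
  (∀ t ∈ Set.Ico (0 : ℝ) T, Per (u t) ∧ Per (B t) ∧ Per (E t) ∧ Per (q t)) ∧
  ∀ t ∈ Set.Ioo (0 : ℝ) T, ∀ x : Pt,
    dt u t x - lap (u t) x + adv3 (u t) (u t) x + grad3 (q t) x =
        cross (jcur u B E t x) (B t x) ∧
      ε • dt E t x - curl2 (B t) x = -(jcur u B E t x) ∧
      dt B t x + curl2 (E t) x = 0 ∧
      div3 (u t) x = 0 ∧ div3 (B t) x = 0

/-- `(u, B, p)` is a smooth periodic solution of the 2D MHD system on `𝕋² × (0, T)`. -/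
def IsMHD (T : ℝ) (u B : ℝ → Pt → Fin 2 → ℝ) (p : ℝ → Pt → ℝ) : Prop :=
  SmoothOnT T u ∧ SmoothOnT T B ∧ SmoothOnT T p ∧
  (∀ t ∈ Set.Ico (0 : ℝ) T, Per (u t) ∧ Per (B t) ∧ Per (p t)) ∧
  ∀ t ∈ Set.Ioo (0 : ℝ) T, ∀ x : Pt,
    dt u t x - lap (u t) x + adv2 (u t) (u t) x + grad2 (p t) x
        - adv2 (B t) (B t) x = 0 ∧
      dt B t x - lap (B t) x + adv2 (u t) (B t) x - adv2 (B t) (u t) x = 0 ∧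
      div2 (u t) x = 0 ∧ div2 (B t) x = 0

/-- Fourier coefficient of a periodic scalar function on the 2D torus. -/
def fcoef (f : Pt → ℝ) (n : Fin 2 → ℤ) : ℂ :=
  (1 / (2 * π) ^ 2 : ℂ) *
    ∫ x in box, Complex.exp (-Complex.I * ∑ k, (n k : ℂ) * (x k : ℂ)) * (f x : ℂ)

/-- The Sobolev weight `(1 + |n|²)^s`. -/
def sobW (s : ℝ) (n : Fin 2 → ℤ) : ℝ := (1 + ∑ k, ((n k : ℝ)) ^ 2) ^ s

/-- Summand of the `Hˢ(𝕋²)` norm. -/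
def HsSummand {m : ℕ} (s : ℝ) (f : Pt → Fin m → ℝ) (n : Fin 2 → ℤ) : ℝ :=
  sobW s n * ∑ i, Complex.normSq (fcoef (fun x => f x i) n)

/-- Membership in the Sobolev space `Hˢ(𝕋²)`. -/
def MemHs {m : ℕ} (s : ℝ) (f : Pt → Fin m → ℝ) : Prop := Summable (HsSummand s f)

/-- Squared `Hˢ(𝕋²)` norm. -/
def HsNormSq {m : ℕ} (s : ℝ) (f : Pt → Fin m → ℝ) : ℝ := ∑' n, HsSummand s f n

/-- `f ∈ C([0,T); Hˢ(𝕋²))`. -/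
def ContInHs {m : ℕ} (s T : ℝ) (f : ℝ → Pt → Fin m → ℝ) : Prop :=
  (∀ t ∈ Set.Ico (0 : ℝ) T, MemHs s (f t)) ∧
  ∀ t₀ ∈ Set.Ico (0 : ℝ) T, ∀ δ > (0 : ℝ), ∃ η > (0 : ℝ), ∀ t ∈ Set.Ico (0 : ℝ) T,
    |t - t₀| < η → HsNormSq s (fun x => f t x - f t₀ x) < δ

/-- Squared `H¹(𝕋²)` norm. -/
def H1sq {m : ℕ} (f : Pt → Fin m → ℝ) : ℝ := L2sq f + L2gsq f

/-- `H¹(𝕋²)` norm. -/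
def H1n {m : ℕ} (f : Pt → Fin m → ℝ) : ℝ := Real.sqrt (H1sq f)

/-- The first order energy functional `𝓔₁`. -/
def En1 (ε : ℝ) (u B E : ℝ → Pt → Fin 3 → ℝ) (t : ℝ) : ℝ :=
  ∫ x in box,
    (nsq (u t x) / 2 + nsq (B t x + (2 * ε) • dt B t x) / 2 + 3 * ε * gsq (B t) x
      + ε ^ 2 * nsq (dt B t x) + ε * nsq (E t x) / 2)

/-- The first order dissipation functional `𝓓₁`. -/
def Dis1 (ε : ℝ) (u B E : ℝ → Pt → Fin 3 → ℝ) (t : ℝ) : ℝ :=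
  ∫ x in box,
    (ε ^ 2 * nsq (dt E t x) + gsq (u t) x / 2 + gsq (B t) x / 2 + ε * nsq (dt B t x))

/-- The second order energy functional `𝓔₂`. -/
def En2 (ε : ℝ) (u B E : ℝ → Pt → Fin 3 → ℝ) (t : ℝ) : ℝ :=
  ∫ x in box,
    (gsq (u t) x / 2 + ε * nsq (lap (u t) x) / 2
      + (∑ k : Fin 2, nsq (pd k (B t) x + (2 * ε) • dtpd k B t x)) / 2
      + 3 * ε * nsq (lap (B t) x)
      + ε ^ 2 * ∑ k : Fin 2, nsq (dtpd k B t x)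
      + ε * gsq (E t) x / 2)

/-- The second order dissipation functional `𝓓₂`. -/
def Dis2 (ε : ℝ) (u B E : ℝ → Pt → Fin 3 → ℝ) (t : ℝ) : ℝ :=
  (1 / 4) * ∫ x in box,
    (nsq (lap (u t) x) + nsq (lap (B t) x)
      + ε * ∑ k : Fin 2, nsq (dtpd k u t x)
      + ε ^ 2 * ∑ k : Fin 2, nsq (dtpd k E t x))

/-- The conclusion of the first order a priori estimate (Lemma 3.2), as a property of the
absolute constant `C₁`. -/
def FirstOrderEstimate (C₁ : ℝ) : Prop :=
  ∀ ε > (0 : ℝ), ∀ T > (0 : ℝ), ∀ (u B E : ℝ → Pt → Fin 3 → ℝ) (q : ℝ → Pt → ℝ),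
    IsNSM ε T u B E q →
    (∀ t ∈ Set.Ico (0 : ℝ) T, Linf (u t) + Linf (B t) ≤ C₁ / Real.sqrt ε) →
    ∀ t ∈ Set.Ioo (0 : ℝ) T, ∃ e',
      HasDerivAt (En1 ε u B E) e' t ∧ e' + Dis1 ε u B E t ≤ 0

/-- The conclusion of the second order a priori estimate (Lemma 3.3), as a property of the
absolute constant `C₂`. -/
def SecondOrderEstimate (C₂ : ℝ) : Prop :=
  ∀ ε > (0 : ℝ), ∀ T > (0 : ℝ), ∀ (u B E : ℝ → Pt → Fin 3 → ℝ) (q : ℝ → Pt → ℝ),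
    IsNSM ε T u B E q →
    (∀ t ∈ Set.Ico (0 : ℝ) T, Linf (u t) + Linf (B t) ≤ C₂ / Real.sqrt ε) →
    ∃ C > (0 : ℝ), ∀ t ∈ Set.Ioo (0 : ℝ) T, ∃ e',
      HasDerivAt (En2 ε u B E) e' t ∧
      e' + Dis2 ε u B E t ≤ C * (1 + En1 ε u B E t) * Dis1 ε u B E t * En2 ε u B E t

/-- A (vector valued) space-time test function: smooth, periodic in space and compactly
supported in time in `[0, T)`. -/
def TestFun (T : ℝ) (φ : ℝ → Pt → Fin 3 → ℝ) : Prop :=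
  ContDiff ℝ (⊤ : ℕ∞) (uncurry φ) ∧ (∀ t : ℝ, Per (φ t)) ∧
  ∃ T' < T, ∀ t : ℝ, T' ≤ t → ∀ x : Pt, φ t x = 0

/-- A planar space-time test function, additionally divergence free. -/
def TestFun2 (T : ℝ) (φ : ℝ → Pt → Fin 2 → ℝ) : Prop :=
  ContDiff ℝ (⊤ : ℕ∞) (uncurry φ) ∧ (∀ t : ℝ, Per (φ t)) ∧ (∀ (t : ℝ) (x : Pt), div2 (φ t) x = 0) ∧
  ∃ T' < T, ∀ t : ℝ, T' ≤ t → ∀ x : Pt, φ t x = 0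

/-- A scalar space-time test function. -/
def TestFunS (T : ℝ) (ψ : ℝ → Pt → ℝ) : Prop :=
  ContDiff ℝ (⊤ : ℕ∞) (uncurry ψ) ∧ (∀ t : ℝ, Per (ψ t)) ∧
  ∃ T' < T, ∀ t : ℝ, T' ≤ t → ∀ x : Pt, ψ t x = 0

/-- Weak-* convergence in `C([0,T); H¹(𝕋²))` of a family indexed by `ε`, as `ε → 0⁺`. -/
def WeakStarH1Conv (T : ℝ) (F : ℝ → ℝ → Pt → Fin 3 → ℝ) (f : ℝ → Pt → Fin 3 → ℝ) : Prop :=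
  ∀ φ : ℝ → Pt → Fin 3 → ℝ, TestFun T φ →
    Tendsto (fun ε => ∫ t in Set.Ioc (0 : ℝ) T, ∫ x in box,
        (dot (F ε t x - f t x) (φ t x)
          + ∑ k : Fin 2, dot (pd k (F ε t) x - pd k (f t) x) (pd k (φ t) x)))
      (𝓝[>] (0 : ℝ)) (𝓝 0)

/-- Embedding of a planar vector field as a three dimensional one with vanishing third
component. -/
def emb23 (v : Fin 2 → ℝ) : Fin 3 → ℝ := ![v 0, v 1, 0]

namespace NSMaux

abbrev V3 := Fin 3 → ℝ

lemma nsq_nonneg {m : ℕ} (v : Fin m → ℝ) : 0 ≤ nsq v :=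
  Finset.sum_nonneg fun _ _ => sq_nonneg _

lemma continuous_nsq {m : ℕ} : Continuous (nsq (m := m)) :=
  continuous_finset_sum _ fun i _ => (continuous_apply i).pow 2

lemma contDiff_nsq {m : ℕ} : ContDiff ℝ (⊤ : ℕ∞) (nsq (m := m)) :=
  ContDiff.sum fun i _ => ((ContinuousLinearMap.proj (R := ℝ) (φ := fun _ : Fin m => ℝ) i).contDiff).pow 2

lemma gsq_nonneg {m : ℕ} (f : Pt → Fin m → ℝ) (x : Pt) : 0 ≤ gsq f x :=
  add_nonneg (nsq_nonneg _) (nsq_nonneg _)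

lemma measurableSet_box : MeasurableSet box := measurableSet_Icc

lemma isCompact_box : IsCompact box := isCompact_Icc

lemma twopi_pos : (0:ℝ) < 2 * π := by positivity

lemma nsq_add_le {m : ℕ} (a b : Fin m → ℝ) : nsq (a + b) ≤ 2 * nsq a + 2 * nsq b := by
  unfold nsq
  rw [Finset.mul_sum, Finset.mul_sum, ← Finset.sum_add_distrib]
  refine Finset.sum_le_sum fun i _ => ?_
  simp only [Pi.add_apply]
  nlinarith [sq_nonneg (a i - b i)]

lemma nsq_sub_le {m : ℕ} (a b : Fin m → ℝ) : nsq (a - b) ≤ 2 * nsq a + 2 * nsq b := by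
  unfold nsq
  rw [Finset.mul_sum, Finset.mul_sum, ← Finset.sum_add_distrib]
  refine Finset.sum_le_sum fun i _ => ?_
  simp only [Pi.sub_apply]
  nlinarith [sq_nonneg (a i + b i)]

lemma nsq_cross_le (a b : V3) : nsq (cross a b) ≤ nsq a * nsq b := by
  have h : nsq (cross a b) = (a 1 * b 2 - a 2 * b 1)^2 + ((a 2 * b 0 - a 0 * b 2)^2
      + ((a 0 * b 1 - a 1 * b 0)^2 + 0)) := by
    simp [nsq, cross, Fin.sum_univ_succ]
  have h2 : nsq a = a 0 ^2 + (a 1 ^2 + (a 2 ^2 + 0)) := by simp [nsq, Fin.sum_univ_succ]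
  have h3 : nsq b = b 0 ^2 + (b 1 ^2 + (b 2 ^2 + 0)) := by simp [nsq, Fin.sum_univ_succ]
  rw [h, h2, h3]
  nlinarith [sq_nonneg (a 0 * b 0 + a 1 * b 1 + a 2 * b 2)]

end NSMaux
namespace NSMaux

/-- The parabolic domain. -/
def Sdom (T : ℝ) : Set (ℝ × Pt) := Set.Ico (0:ℝ) T ×ˢ (Set.univ : Set Pt)

lemma uniqueDiffOn_Sdom (T : ℝ) : UniqueDiffOn ℝ (Sdom T) :=
  (uniqueDiffOn_Ico 0 T).prod uniqueDiffOn_univ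

lemma sliceCont {T : ℝ} {α : Type*} [TopologicalSpace α] {g : ℝ × Pt → α}
    (hg : ContinuousOn g (Sdom T)) {t : ℝ} (ht : t ∈ Set.Ico (0:ℝ) T) :
    Continuous (fun x : Pt => g (t, x)) := by
  rw [← continuousOn_univ]
  exact hg.comp (Continuous.continuousOn (continuous_const.prodMk continuous_id))
    (fun x _ => ⟨ht, Set.mem_univ x⟩)

lemma timeCont {T : ℝ} {α : Type*} [TopologicalSpace α] {g : ℝ × Pt → α}
    (hg : ContinuousOn g (Sdom T)) (x : Pt) :
    ContinuousOn (fun t : ℝ => g (t, x)) (Set.Ico (0:ℝ) T) :=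
  hg.comp (Continuous.continuousOn (continuous_id.prodMk continuous_const))
    (fun t ht => ⟨ht, Set.mem_univ x⟩)

structure Reg (T : ℝ) (f : ℝ → Pt → V3) : Prop where
  jc : ContinuousOn (fun p : ℝ × Pt => f p.1 p.2) (Sdom T)
  jdt : ContinuousOn (fun p : ℝ × Pt => dt f p.1 p.2) (Sdom T)
  jpd : ∀ k : Fin 2, ContinuousOn (fun p : ℝ × Pt => pd k (f p.1) p.2) (Sdom T)

lemma reg_of_smooth {T : ℝ} {f : ℝ → Pt → V3} (hf : SmoothOnT T f) : Reg T f := by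
  have hf' : ContDiffOn ℝ (⊤ : ℕ∞) (Function.uncurry f) (Sdom T) := hf
  have hSu : UniqueDiffOn ℝ (Sdom T) := uniqueDiffOn_Sdom T
  set F := fderivWithin ℝ (Function.uncurry f) (Sdom T) with hFdef
  have hFc : ContinuousOn F (Sdom T) :=
    (hf'.fderivWithin hSu (m := (⊤ : ℕ∞)) (by simp)).continuousOn
  have hdf : ∀ p ∈ Sdom T, HasFDerivWithinAt (Function.uncurry f) (F p) (Sdom T) p :=
    fun p hp => ((hf'.differentiableOn (by simp)) p hp).hasFDerivWithinAt
  have hdt : ∀ t ∈ Set.Ico (0:ℝ) T, ∀ x : Pt, dt f t x = F (t, x) (1, 0) := by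
    intro t ht x
    have hγ : HasDerivWithinAt (fun s : ℝ => (s, x)) ((1:ℝ), (0:Pt)) (Set.Ico (0:ℝ) T) t :=
      ((hasDerivWithinAt_id t _).prodMk (hasDerivWithinAt_const t _ x))
    have hmaps : Set.MapsTo (fun s : ℝ => (s, x)) (Set.Ico (0:ℝ) T) (Sdom T) :=
      fun s hs => ⟨hs, Set.mem_univ x⟩
    have hcomp := (hdf (t, x) ⟨ht, Set.mem_univ x⟩).comp_hasDerivWithinAt t hγ hmaps
    have h1 : derivWithin (fun s => f s x) (Set.Ico (0:ℝ) T) t = F (t, x) (1, 0) :=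
      hcomp.derivWithin ((uniqueDiffOn_Ico 0 T) t ht)
    have h2 : dt f t x = derivWithin (fun s => f s x) (Set.Ico (0:ℝ) T) t := by
      unfold dt
      apply derivWithin_congr_set
      filter_upwards [Iio_mem_nhds ht.2] with s hs
      simp only [Set.mem_Ici, Set.mem_Ico, eq_iff_iff]
      exact ⟨fun h => ⟨h, hs⟩, fun h => h.1⟩
    rw [h2, h1]
  have hsingle : ∀ k : Fin 2, ∀ t ∈ Set.Ico (0:ℝ) T, ∀ x : Pt,
      pd k (f t) x = F (t, x) (0, Pi.single k 1) := by
    intro k t ht x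
    have hδ : HasFDerivAt (fun y : Pt => (t, y))
        (((0 : Pt →L[ℝ] ℝ)).prod (ContinuousLinearMap.id ℝ Pt)) x :=
      (hasFDerivAt_const t x).prodMk (hasFDerivAt_id x)
    have hmaps : Set.MapsTo (fun y : Pt => (t, y)) (Set.univ : Set Pt) (Sdom T) :=
      fun y _ => ⟨ht, Set.mem_univ y⟩
    have hcomp := HasFDerivWithinAt.comp x (hdf (t, x) ⟨ht, Set.mem_univ x⟩)
      hδ.hasFDerivWithinAt hmaps
    have hAt : HasFDerivAt (f t)
        ((F (t, x)).comp (((0 : Pt →L[ℝ] ℝ)).prod (ContinuousLinearMap.id ℝ Pt))) x := by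
      rw [← hasFDerivWithinAt_univ]
      exact hcomp
    unfold pd
    rw [hAt.fderiv]
    simp
  refine ⟨?_, ?_, ?_⟩
  · exact hf'.continuousOn
  · refine ContinuousOn.congr
      (hFc.clm_apply (continuousOn_const (c := ((1:ℝ), (0:Pt))))) ?_
    intro p hp
    have := hdt p.1 hp.1 p.2
    simpa using this
  · intro k
    refine ContinuousOn.congr
      (hFc.clm_apply (continuousOn_const (c := ((0:ℝ), (Pi.single k 1 : Pt))))) ?_
    intro p hp
    have := hsingle k p.1 hp.1 p.2
    simpa using this

lemma slice_contDiff {T : ℝ} {f : ℝ → Pt → V3} (hf : SmoothOnT T f) {t : ℝ}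
    (ht : t ∈ Set.Ioo (0:ℝ) T) : ContDiff ℝ (⊤ : ℕ∞) (f t) := by
  rw [contDiff_iff_contDiffAt]
  intro x
  have hopen : IsOpen (Set.Ioo (0:ℝ) T ×ˢ (Set.univ : Set Pt)) := isOpen_Ioo.prod isOpen_univ
  have hsub : (Set.Ioo (0:ℝ) T ×ˢ (Set.univ : Set Pt)) ⊆ Sdom T :=
    Set.prod_mono (Set.Ioo_subset_Ico_self) (le_refl _)
  have hjoint : ContDiffAt ℝ (⊤ : ℕ∞) (Function.uncurry f) (t, x) :=
    ((hf.mono hsub).contDiffAt (hopen.mem_nhds ⟨ht, Set.mem_univ x⟩))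
  have hcurve : ContDiffAt ℝ (⊤ : ℕ∞) (fun y : Pt => (t, y)) x :=
    (contDiff_const.prodMk contDiff_id).contDiffAt
  exact hjoint.comp x hcurve

end NSMaux
namespace NSMaux

open MeasureTheory

lemma volume_box_lt_top : volume box < ⊤ := isCompact_box.measure_lt_top

/-- Parametric continuity of box integrals on `[0,T)`. -/
lemma contOn_intBox {T : ℝ} {Φ : ℝ × Pt → ℝ} (hΦ : ContinuousOn Φ (Sdom T)) :
    ContinuousOn (fun t => ∫ x in box, Φ (t, x)) (Set.Ico (0:ℝ) T) := by
  intro t₀ ht₀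
  obtain ⟨t₁, ht01, ht1T⟩ := exists_between ht₀.2
  have hKsub : (Set.Icc (0:ℝ) t₁ ×ˢ box) ⊆ Sdom T := by
    intro p hp
    exact ⟨⟨hp.1.1, lt_of_le_of_lt hp.1.2 ht1T⟩, Set.mem_univ _⟩
  obtain ⟨M, hM⟩ := (IsCompact.prod isCompact_Icc isCompact_box).exists_bound_of_continuousOn
    (hΦ.mono hKsub)
  have hnb : Set.Icc (0:ℝ) t₁ ∈ 𝓝[Set.Ico (0:ℝ) T] t₀ := by
    refine Filter.mem_of_superset
      (inter_mem_nhdsWithin _ (Iio_mem_nhds ht01)) ?_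
    rintro s ⟨hs1, hs2⟩
    exact ⟨hs1.1, le_of_lt hs2⟩
  apply continuousWithinAt_of_dominated (bound := fun _ => M)
  · filter_upwards [self_mem_nhdsWithin] with t ht
    exact (sliceCont hΦ ht).aestronglyMeasurable
  · filter_upwards [hnb] with t ht
    filter_upwards [ae_restrict_mem measurableSet_box] with x hx
    exact hM (t, x) ⟨ht, hx⟩
  · exact integrableOn_const volume_box_lt_top.ne
  · refine Filter.Eventually.of_forall fun x => ?_
    exact (timeCont hΦ x) t₀ ht₀

/-- Parametric continuity of line integrals. -/
lemma cont_param_line {W : ℝ × ℝ → ℝ} (hW : Continuous W) (c : ℝ) :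
    Continuous fun b => ∫ s in Set.Icc (0:ℝ) c, W (s, b) := by
  rw [continuous_iff_continuousAt]
  intro b₀
  obtain ⟨M, hM⟩ := (IsCompact.prod (isCompact_Icc (a := (0:ℝ)) (b := c))
    (isCompact_Icc (a := b₀ - 1) (b := b₀ + 1))).exists_bound_of_continuousOn
    hW.continuousOn
  apply continuousAt_of_dominated (bound := fun _ => M)
  · exact Filter.Eventually.of_forall fun b =>
      (hW.comp (continuous_id.prodMk continuous_const)).aestronglyMeasurable
  · filter_upwards [Icc_mem_nhds (by linarith : b₀ - 1 < b₀) (by linarith : b₀ < b₀ + 1)] with b hb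
    filter_upwards [ae_restrict_mem measurableSet_Icc] with s hs
    exact hM (s, b) ⟨hs, hb⟩
  · exact integrableOn_const (by rw [Real.volume_Icc]; exact ENNReal.ofReal_ne_top)
  · exact Filter.Eventually.of_forall fun s =>
      (hW.comp (continuous_const.prodMk continuous_id)).continuousAt

end NSMaux
namespace NSMaux

open MeasureTheory

/-- Identification of `ℝ × ℝ` with `Pt`. -/
def mm (p : ℝ × ℝ) : Pt := (MeasurableEquiv.finTwoArrow (α := ℝ)).symm p

lemma mm_apply_zero (p : ℝ × ℝ) : mm p 0 = p.1 := rfl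

lemma mm_apply_one (p : ℝ × ℝ) : mm p 1 = p.2 := rfl

lemma continuous_mm : Continuous mm := by
  apply continuous_pi
  intro i
  fin_cases i
  · exact continuous_fst
  · exact continuous_snd

lemma mm_preimage_box : mm ⁻¹' box = Set.Icc (0:ℝ) (2*π) ×ˢ Set.Icc (0:ℝ) (2*π) := by
  ext p
  simp only [Set.mem_preimage, box, Set.mem_Icc, Set.mem_prod, Pi.le_def]
  constructor
  · rintro ⟨h1, h2⟩
    exact ⟨⟨h1 0, h2 0⟩, ⟨h1 1, h2 1⟩⟩
  · rintro ⟨⟨h10, h20⟩, ⟨h11, h21⟩⟩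
    constructor <;> (intro i; fin_cases i) <;> assumption

lemma integral_box_eq (h : Pt → ℝ) :
    (∫ x in box, h x) = ∫ p in Set.Icc (0:ℝ) (2*π) ×ˢ Set.Icc (0:ℝ) (2*π), h (mm p) := by
  have hmp : MeasurePreserving mm volume volume :=
    (volume_preserving_finTwoArrow ℝ).symm _
  have hemb : MeasurableEmbedding mm :=
    (MeasurableEquiv.finTwoArrow (α := ℝ)).symm.measurableEmbedding
  rw [← hmp.setIntegral_preimage_emb hemb h box, mm_preimage_box]

lemma hasDerivAt_mm_fst (b : ℝ) (a : ℝ) :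
    HasDerivAt (fun s : ℝ => mm (s, b)) (Pi.single 0 1 : Pt) a := by
  apply hasDerivAt_pi.2
  intro i
  fin_cases i
  · show HasDerivAt (fun s : ℝ => s) ((Pi.single (0:Fin 2) (1:ℝ) : Pt) 0) a
    simpa using (hasDerivAt_id' a)
  · simpa [mm_apply_one] using (hasDerivAt_const a b)

lemma hasDerivAt_mm_snd (a : ℝ) (b : ℝ) :
    HasDerivAt (fun s : ℝ => mm (a, s)) (Pi.single 1 1 : Pt) b := by
  apply hasDerivAt_pi.2
  intro i
  fin_cases i
  · simpa [mm_apply_zero] using (hasDerivAt_const b a)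
  · show HasDerivAt (fun s : ℝ => s) ((Pi.single (1:Fin 2) (1:ℝ) : Pt) 1) b
    simpa using (hasDerivAt_id' b)

/-- 1D average bound. -/
lemma oneD {c : ℝ} (hc : 0 < c) {Φ Φ' : ℝ → ℝ} (hd : ∀ s, HasDerivAt Φ (Φ' s) s)
    (hΦc : Continuous Φ) (hΦ'c : Continuous Φ') {a : ℝ} (ha : a ∈ Set.Icc 0 c) :
    Φ a ≤ c⁻¹ * (∫ s in Set.Icc 0 c, Φ s) + ∫ s in Set.Icc 0 c, |Φ' s| := by
  set I := ∫ s in Set.Icc 0 c, |Φ' s| with hI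
  have hIint : IntegrableOn (fun s => |Φ' s|) (Set.Icc 0 c) :=
    (hΦ'c.abs.continuousOn).integrableOn_compact isCompact_Icc
  have key : ∀ s ∈ Set.Icc (0:ℝ) c, Φ a - I ≤ Φ s := by
    intro s hs
    have hFTC : ∫ r in s..a, Φ' r = Φ a - Φ s :=
      intervalIntegral.integral_eq_sub_of_hasDerivAt (fun r _ => hd r)
        (hΦ'c.intervalIntegrable s a)
    have habs : |Φ a - Φ s| ≤ I := by
      rw [← hFTC]
      rcases le_total s a with h | h
      · rw [intervalIntegral.integral_of_le h]
        have hni := norm_integral_le_integral_norm (μ := volume.restrict (Set.Ioc s a)) Φ'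
        simp only [Real.norm_eq_abs] at hni
        refine hni.trans ?_
        refine setIntegral_mono_set hIint ?_ ?_
        · exact Filter.Eventually.of_forall fun r => abs_nonneg _
        · exact HasSubset.Subset.eventuallyLE (Set.Ioc_subset_Icc_self.trans
            (Set.Icc_subset_Icc hs.1 ha.2))
      · rw [intervalIntegral.integral_symm, abs_neg, intervalIntegral.integral_of_le h]
        have hni := norm_integral_le_integral_norm (μ := volume.restrict (Set.Ioc a s)) Φ'
        simp only [Real.norm_eq_abs] at hni
        refine hni.trans ?_
        refine setIntegral_mono_set hIint ?_ ?_
        · exact Filter.Eventually.of_forall fun r => abs_nonneg _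
        · exact HasSubset.Subset.eventuallyLE (Set.Ioc_subset_Icc_self.trans
            (Set.Icc_subset_Icc ha.1 hs.2))
    linarith [(abs_le.1 habs).2]
  have hmono : ∫ _ in Set.Icc (0:ℝ) c, (Φ a - I) ≤ ∫ s in Set.Icc (0:ℝ) c, Φ s := by
    refine setIntegral_mono_on ?_ ?_ measurableSet_Icc key
    · exact integrableOn_const (by rw [Real.volume_Icc]; exact ENNReal.ofReal_ne_top)
    · exact hΦc.continuousOn.integrableOn_compact isCompact_Icc
  rw [setIntegral_const, measureReal_def, Real.volume_Icc, smul_eq_mul,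
    ENNReal.toReal_ofReal (by linarith : (0:ℝ) ≤ c - 0)] at hmono
  have h2 : Φ a - I ≤ (∫ s in Set.Icc 0 c, Φ s) / c := by
    rw [le_div_iff₀ hc]
    nlinarith [hmono]
  rw [div_eq_inv_mul] at h2
  linarith


end NSMaux

namespace NSMaux

open MeasureTheory

lemma volume_Icc2pi_lt_top : volume (Set.Icc (0:ℝ) (2*π)) < ⊤ := by
  rw [Real.volume_Icc]; exact ENNReal.ofReal_lt_top

private abbrev Qset : Set (ℝ × ℝ) := Set.Icc (0:ℝ) (2*π) ×ˢ Set.Icc (0:ℝ) (2*π)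

lemma isCompact_Qset : IsCompact Qset := isCompact_Icc.prod isCompact_Icc

lemma integrableOn_Qset {f : ℝ × ℝ → ℝ} (hf : Continuous f) : IntegrableOn f Qset volume :=
  hf.continuousOn.integrableOn_compact isCompact_Qset

lemma integrable_prod_restrict {f : ℝ × ℝ → ℝ} (hf : Continuous f) :
    Integrable f ((volume.restrict (Set.Icc (0:ℝ) (2*π))).prod
      (volume.restrict (Set.Icc (0:ℝ) (2*π)))) := by
  rw [Measure.prod_restrict, ← Measure.volume_eq_prod]
  exact integrableOn_Qset hf

lemma iter_snd {h : Pt → ℝ} (hc : Continuous h) :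
    (∫ a in Set.Icc (0:ℝ) (2*π), ∫ s in Set.Icc (0:ℝ) (2*π), h (mm (a, s)))
      = ∫ x in box, h x := by
  rw [integral_box_eq h]
  have hint : IntegrableOn (fun p : ℝ × ℝ => h (mm p)) Qset (volume.prod volume) := by
    rw [← Measure.volume_eq_prod]; exact integrableOn_Qset (hc.comp continuous_mm)
  calc (∫ a in Set.Icc (0:ℝ) (2*π), ∫ s in Set.Icc (0:ℝ) (2*π), h (mm (a, s)))
      = ∫ p in Qset, h (mm p) ∂(volume.prod volume) := (setIntegral_prod _ hint).symm
    _ = ∫ p in Qset, h (mm p) := by rw [← Measure.volume_eq_prod]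

lemma iter_fst {h : Pt → ℝ} (hc : Continuous h) :
    (∫ y in Set.Icc (0:ℝ) (2*π), ∫ s in Set.Icc (0:ℝ) (2*π), h (mm (s, y)))
      = ∫ x in box, h x := by
  rw [integral_box_eq h]
  have hint : Integrable (fun p : ℝ × ℝ => h (mm (p.2, p.1)))
      ((volume.restrict (Set.Icc (0:ℝ) (2*π))).prod
        (volume.restrict (Set.Icc (0:ℝ) (2*π)))) :=
    integrable_prod_restrict ((hc.comp continuous_mm).comp
      (continuous_snd.prodMk continuous_fst))
  calc (∫ y in Set.Icc (0:ℝ) (2*π), ∫ s in Set.Icc (0:ℝ) (2*π), h (mm (s, y)))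
      = ∫ z, h (mm (z.2, z.1)) ∂((volume.restrict (Set.Icc (0:ℝ) (2*π))).prod
          (volume.restrict (Set.Icc (0:ℝ) (2*π)))) := (integral_prod _ hint).symm
    _ = ∫ z, h (mm z) ∂((volume.restrict (Set.Icc (0:ℝ) (2*π))).prod
          (volume.restrict (Set.Icc (0:ℝ) (2*π)))) :=
        integral_prod_swap (fun w => h (mm w))
    _ = ∫ p in Qset, h (mm p) := by
        rw [Measure.prod_restrict, ← Measure.volume_eq_prod]

end NSMaux

namespace NSMaux

open MeasureTheory

lemma continuous_pd {φ : Pt → ℝ} (hφ : ContDiff ℝ (⊤ : ℕ∞) φ) (k : Fin 2) :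
    Continuous (pd k φ) :=
  (hφ.continuous_fderiv (by simp)).clm_apply continuous_const

lemma prod_bound (φ ψ : Pt → ℝ) (hφ : ContDiff ℝ (⊤ : ℕ∞) φ) (hψ : ContDiff ℝ (⊤ : ℕ∞) ψ)
    (hφ0 : ∀ x, 0 ≤ φ x) (hψ0 : ∀ x, 0 ≤ ψ x) :
    (∫ x in box, φ x * ψ x) ≤
      ((2*π)⁻¹ * (∫ x in box, φ x) + ∫ x in box, |pd 0 φ x|) *
      ((2*π)⁻¹ * (∫ x in box, ψ x) + ∫ x in box, |pd 1 ψ x|) := by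
  have hφc : Continuous φ := hφ.continuous
  have hψc : Continuous ψ := hψ.continuous
  have hpd0 : Continuous (pd 0 φ) := continuous_pd hφ 0
  have hpd1 : Continuous (pd 1 ψ) := continuous_pd hψ 1
  -- derivatives along coordinate lines
  have hd1 : ∀ b a : ℝ, HasDerivAt (fun s => φ (mm (s, b))) (pd 0 φ (mm (a, b))) a := by
    intro b a
    exact ((hφ.differentiable (by simp)) (mm (a, b))).hasFDerivAt.comp_hasDerivAt a
      (hasDerivAt_mm_fst b a)
  have hd2 : ∀ a b : ℝ, HasDerivAt (fun s => ψ (mm (a, s))) (pd 1 ψ (mm (a, b))) b := by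
    intro a b
    exact ((hψ.differentiable (by simp)) (mm (a, b))).hasFDerivAt.comp_hasDerivAt b
      (hasDerivAt_mm_snd a b)
  set A : ℝ → ℝ := fun y => (2*π)⁻¹ * (∫ s in Set.Icc (0:ℝ) (2*π), φ (mm (s, y)))
      + ∫ s in Set.Icc (0:ℝ) (2*π), |pd 0 φ (mm (s, y))| with hAdef
  set D : ℝ → ℝ := fun a => (2*π)⁻¹ * (∫ s in Set.Icc (0:ℝ) (2*π), ψ (mm (a, s)))
      + ∫ s in Set.Icc (0:ℝ) (2*π), |pd 1 ψ (mm (a, s))| with hDdef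
  have hAcont : Continuous A := by
    refine Continuous.add (Continuous.mul continuous_const ?_) ?_
    · exact cont_param_line (hφc.comp continuous_mm) _
    · exact cont_param_line ((hpd0.comp continuous_mm).abs) _
  have hDcont : Continuous D := by
    refine Continuous.add (Continuous.mul continuous_const ?_) ?_
    · exact cont_param_line ((hψc.comp continuous_mm).comp
        (continuous_snd.prodMk continuous_fst)) _
    · exact cont_param_line (((hpd1.comp continuous_mm).comp
        (continuous_snd.prodMk continuous_fst)).abs) _
  have hAnn : ∀ y, 0 ≤ A y := by
    intro y
    refine add_nonneg (mul_nonneg (by positivity) ?_) ?_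
    · exact setIntegral_nonneg measurableSet_Icc fun s _ => hφ0 _
    · exact setIntegral_nonneg measurableSet_Icc fun s _ => abs_nonneg _
  have hφA : ∀ p ∈ Qset, φ (mm p) ≤ A p.2 := by
    intro p hp
    exact oneD twopi_pos (hd1 p.2) (hφc.comp (continuous_mm.comp
      (continuous_id.prodMk continuous_const)))
      ((hpd0.comp (continuous_mm.comp (continuous_id.prodMk continuous_const)))) hp.1
  have hψD : ∀ p ∈ Qset, ψ (mm p) ≤ D p.1 := by
    intro p hp
    exact oneD twopi_pos (hd2 p.1) (hψc.comp (continuous_mm.comp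
      (continuous_const.prodMk continuous_id)))
      ((hpd1.comp (continuous_mm.comp (continuous_const.prodMk continuous_id)))) hp.2
  -- main chain
  have step1 : (∫ x in box, φ x * ψ x) = ∫ p in Qset, φ (mm p) * ψ (mm p) :=
    integral_box_eq _
  have step2 : (∫ p in Qset, φ (mm p) * ψ (mm p)) ≤ ∫ p in Qset, D p.1 * A p.2 := by
    refine setIntegral_mono_on ?_ ?_ (measurableSet_Icc.prod measurableSet_Icc) ?_
    · exact integrableOn_Qset ((hφc.comp continuous_mm).mul (hψc.comp continuous_mm))
    · exact integrableOn_Qset ((hDcont.comp continuous_fst).mul (hAcont.comp continuous_snd))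
    · intro p hp
      calc φ (mm p) * ψ (mm p) ≤ A p.2 * D p.1 :=
            mul_le_mul (hφA p hp) (hψD p hp) (hψ0 _) (hAnn _)
        _ = D p.1 * A p.2 := mul_comm _ _
  have step3 : (∫ p in Qset, D p.1 * A p.2)
      = (∫ a in Set.Icc (0:ℝ) (2*π), D a) * ∫ y in Set.Icc (0:ℝ) (2*π), A y := by
    rw [Measure.volume_eq_prod]
    exact setIntegral_prod_mul D A _ _
  -- evaluate the factors
  have hintΦ : IntegrableOn (fun y => ∫ s in Set.Icc (0:ℝ) (2*π), φ (mm (s, y)))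
      (Set.Icc (0:ℝ) (2*π)) :=
    ((cont_param_line (hφc.comp continuous_mm) _).continuousOn).integrableOn_compact
      isCompact_Icc
  have hintΦ' : IntegrableOn (fun y => ∫ s in Set.Icc (0:ℝ) (2*π), |pd 0 φ (mm (s, y))|)
      (Set.Icc (0:ℝ) (2*π)) :=
    ((cont_param_line ((hpd0.comp continuous_mm).abs) _).continuousOn).integrableOn_compact
      isCompact_Icc
  have hintΨ : IntegrableOn (fun a => ∫ s in Set.Icc (0:ℝ) (2*π), ψ (mm (a, s)))
      (Set.Icc (0:ℝ) (2*π)) :=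
    ((cont_param_line ((hψc.comp continuous_mm).comp
      (continuous_snd.prodMk continuous_fst)) _).continuousOn).integrableOn_compact
      isCompact_Icc
  have hintΨ' : IntegrableOn (fun a => ∫ s in Set.Icc (0:ℝ) (2*π), |pd 1 ψ (mm (a, s))|)
      (Set.Icc (0:ℝ) (2*π)) :=
    ((cont_param_line (((hpd1.comp continuous_mm).comp
      (continuous_snd.prodMk continuous_fst)).abs) _).continuousOn).integrableOn_compact
      isCompact_Icc
  have hAval : (∫ y in Set.Icc (0:ℝ) (2*π), A y)
      = (2*π)⁻¹ * (∫ x in box, φ x) + ∫ x in box, |pd 0 φ x| := by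
    rw [hAdef]
    rw [integral_add (hintΦ.const_mul _) hintΦ', integral_const_mul]
    rw [iter_fst hφc, iter_fst (hpd0.abs)]
  have hDval : (∫ a in Set.Icc (0:ℝ) (2*π), D a)
      = (2*π)⁻¹ * (∫ x in box, ψ x) + ∫ x in box, |pd 1 ψ x| := by
    rw [hDdef]
    rw [integral_add (hintΨ.const_mul _) hintΨ', integral_const_mul]
    rw [iter_snd hψc, iter_snd (hpd1.abs)]
  calc (∫ x in box, φ x * ψ x) ≤ (∫ a in Set.Icc (0:ℝ) (2*π), D a)
        * ∫ y in Set.Icc (0:ℝ) (2*π), A y := by rw [step1]; rw [← step3] at *; exact step2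
    _ = _ := by rw [hAval, hDval]; ring

end NSMaux
namespace NSMaux

open MeasureTheory

lemma hasFDerivAt_nsq_comp {U : Pt → V3} (hU : ContDiff ℝ (⊤ : ℕ∞) U) (x : Pt) :
    HasFDerivAt (fun y => nsq (U y))
      (∑ i : Fin 3, (2 * U x i) • ((ContinuousLinearMap.proj i).comp (fderiv ℝ U x))) x := by
  have hUd : HasFDerivAt U (fderiv ℝ U x) x := ((hU.differentiable (by simp)) x).hasFDerivAt
  have hgi : ∀ i : Fin 3, HasFDerivAt (fun y => U y i)
      ((ContinuousLinearMap.proj (R := ℝ) (φ := fun _ : Fin 3 => ℝ) i).comp (fderiv ℝ U x)) x := by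
    intro i
    have h := ((ContinuousLinearMap.proj (R := ℝ) (φ := fun _ : Fin 3 => ℝ) i)).hasFDerivAt.comp
      x hUd
    exact h
  have hsq : ∀ i : Fin 3, HasFDerivAt (fun y => U y i ^ 2)
      ((2 * U x i) • ((ContinuousLinearMap.proj (R := ℝ) (φ := fun _ : Fin 3 => ℝ) i).comp
        (fderiv ℝ U x))) x := by
    intro i
    have h := (hgi i).mul (hgi i)
    have hfun : (fun y => U y i * U y i) = fun y => U y i ^ 2 := by
      funext y; ring
    rw [← hfun]
    exact h.congr_fderiv (by rw [two_mul, add_smul])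
  have hsum := HasFDerivAt.sum (fun i (_ : i ∈ Finset.univ) => hsq i)
  exact hsum

lemma pd_nsq_eq {U : Pt → V3} (hU : ContDiff ℝ (⊤ : ℕ∞) U) (k : Fin 2) (x : Pt) :
    pd k (fun y => nsq (U y)) x = ∑ i : Fin 3, 2 * U x i * pd k U x i := by
  unfold pd
  rw [(hasFDerivAt_nsq_comp hU x).fderiv]
  simp [smul_eq_mul, mul_assoc]

lemma abs_pd_nsq_le {U : Pt → V3} (hU : ContDiff ℝ (⊤ : ℕ∞) U) (k : Fin 2) (x : Pt) :
    |pd k (fun y => nsq (U y)) x| ≤ nsq (U x) + nsq (pd k U x) := by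
  rw [pd_nsq_eq hU k x]
  refine (Finset.abs_sum_le_sum_abs _ _).trans ?_
  have : ∀ i : Fin 3, |2 * U x i * pd k U x i| ≤ U x i ^ 2 + pd k U x i ^ 2 := by
    intro i
    rw [abs_le]
    constructor <;> nlinarith [sq_nonneg (U x i + pd k U x i), sq_nonneg (U x i - pd k U x i)]
  refine (Finset.sum_le_sum fun i _ => this i).trans ?_
  rw [Finset.sum_add_distrib]
  exact le_of_eq rfl

end NSMaux
namespace NSMaux

open MeasureTheory

lemma continuous_cross : Continuous (fun q : V3 × V3 => cross q.1 q.2) := by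
  apply continuous_pi
  intro i
  fin_cases i
  · show Continuous fun q : V3 × V3 => q.1 1 * q.2 2 - q.1 2 * q.2 1
    fun_prop
  · show Continuous fun q : V3 × V3 => q.1 2 * q.2 0 - q.1 0 * q.2 2
    fun_prop
  · show Continuous fun q : V3 × V3 => q.1 0 * q.2 1 - q.1 1 * q.2 0
    fun_prop

lemma continuous_pdV {α : Type*} [NormedAddCommGroup α] [NormedSpace ℝ α]
    {f : Pt → α} (hf : ContDiff ℝ (⊤ : ℕ∞) f) (k : Fin 2) :
    Continuous (pd k f) :=
  (hf.continuous_fderiv (by simp)).clm_apply continuous_const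

lemma L2sq_nonneg {m : ℕ} (f : Pt → Fin m → ℝ) : 0 ≤ L2sq f :=
  setIntegral_nonneg measurableSet_box fun x _ => nsq_nonneg _

lemma L2gsq_nonneg {m : ℕ} (f : Pt → Fin m → ℝ) : 0 ≤ L2gsq f :=
  setIntegral_nonneg measurableSet_box fun x _ => gsq_nonneg _ _

lemma H1sq_nonneg {m : ℕ} (f : Pt → Fin m → ℝ) : 0 ≤ H1sq f :=
  add_nonneg (L2sq_nonneg f) (L2gsq_nonneg f)

lemma H1sq_le_sq {m : ℕ} {f : Pt → Fin m → ℝ} {c : ℝ} (h : H1n f ≤ c) : H1sq f ≤ c^2 := by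
  have h0 : H1sq f = (H1n f)^2 := by
    rw [H1n, Real.sq_sqrt (H1sq_nonneg f)]
  rw [h0]
  exact pow_le_pow_left₀ (Real.sqrt_nonneg _) h 2

/-- The Ladyzhenskaya-type bound on the cross product. -/
lemma cross_L2_bound {Cb : ℝ} (U W : Pt → V3) (hU : ContDiff ℝ (⊤ : ℕ∞) U) (hW : ContDiff ℝ (⊤ : ℕ∞) W)
    (hKU : H1sq U ≤ Cb) (hKW : H1sq W ≤ Cb) :
    (∫ x in box, nsq (cross (U x) (W x))) ≤ 4 * Cb^2 := by
  have hCb : 0 ≤ Cb := le_trans (H1sq_nonneg U) hKU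
  have hUc := hU.continuous
  have hWc := hW.continuous
  have hφ : ContDiff ℝ (⊤ : ℕ∞) (fun x => nsq (U x)) := contDiff_nsq.comp hU
  have hψ : ContDiff ℝ (⊤ : ℕ∞) (fun x => nsq (W x)) := contDiff_nsq.comp hW
  -- step 1 : pointwise Lagrange
  have step1 : (∫ x in box, nsq (cross (U x) (W x))) ≤ ∫ x in box, nsq (U x) * nsq (W x) := by
    refine setIntegral_mono_on ?_ ?_ measurableSet_box fun x _ => nsq_cross_le _ _
    · exact ((continuous_nsq.comp (continuous_cross.comp
        (hUc.prodMk hWc))).continuousOn).integrableOn_compact isCompact_box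
    · exact ((hφ.continuous.mul hψ.continuous).continuousOn).integrableOn_compact isCompact_box
  -- factor bounds
  have hfac : ∀ (V : Pt → V3) (hV : ContDiff ℝ (⊤ : ℕ∞) V) (k : Fin 2), H1sq V ≤ Cb →
      (2*π)⁻¹ * (∫ x in box, nsq (V x)) + (∫ x in box, |pd k (fun y => nsq (V y)) x|)
        ≤ 2 * Cb := by
    intro V hV k hKV
    have hVc := hV.continuous
    have hnsqV : ContDiff ℝ (⊤ : ℕ∞) (fun x => nsq (V x)) := contDiff_nsq.comp hV
    have h1 : (∫ x in box, nsq (V x)) = L2sq V := rfl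
    have hL2 : L2sq V ≤ H1sq V := by
      have := L2gsq_nonneg V
      simp only [H1sq]; linarith
    have hpdVcont : Continuous (pd k V) := continuous_pdV hV k
    have h2 : (∫ x in box, |pd k (fun y => nsq (V y)) x|)
        ≤ ∫ x in box, (nsq (V x) + nsq (pd k V x)) := by
      refine setIntegral_mono_on ?_ ?_ measurableSet_box fun x _ => abs_pd_nsq_le hV k x
      · exact (((continuous_pdV hnsqV k).abs).continuousOn).integrableOn_compact isCompact_box
      · exact (((continuous_nsq.comp hVc).add
          (continuous_nsq.comp hpdVcont)).continuousOn).integrableOn_compact isCompact_box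
    have h3 : (∫ x in box, (nsq (V x) + nsq (pd k V x)))
        = L2sq V + ∫ x in box, nsq (pd k V x) := by
      rw [integral_add]
      · rfl
      · exact ((continuous_nsq.comp hVc).continuousOn).integrableOn_compact isCompact_box
      · exact ((continuous_nsq.comp hpdVcont).continuousOn).integrableOn_compact isCompact_box
    have h4 : (∫ x in box, nsq (pd k V x)) ≤ L2gsq V := by
      refine setIntegral_mono_on ?_ ?_ measurableSet_box ?_
      · exact ((continuous_nsq.comp hpdVcont).continuousOn).integrableOn_compact isCompact_box
      · exact (((continuous_nsq.comp (continuous_pdV hV 0)).add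
          (continuous_nsq.comp (continuous_pdV hV 1))).continuousOn).integrableOn_compact
            isCompact_box
      · intro x _
        unfold gsq
        fin_cases k
        · simpa using nsq_nonneg (pd 1 V x)
        · simpa using nsq_nonneg (pd 0 V x)
    have hinv : (2*π)⁻¹ ≤ 1 := by
      rw [inv_le_one_iff₀]
      right
      nlinarith [Real.pi_gt_three]
    have hL2nn : 0 ≤ L2sq V := L2sq_nonneg V
    have hH1V : H1sq V = L2sq V + L2gsq V := rfl
    rw [h1]
    have h5 : (2*π)⁻¹ * L2sq V ≤ L2sq V := by nlinarith [hL2nn, hinv]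
    linarith [h2, h3, h4, hL2, hKV, h5, hH1V.le, hH1V.ge]
  have hb1 := hfac U hU 0 hKU
  have hb2 := hfac W hW 1 hKW
  have hnn1 : 0 ≤ (2*π)⁻¹ * (∫ x in box, nsq (U x))
      + (∫ x in box, |pd 0 (fun y => nsq (U y)) x|) := by
    refine add_nonneg (mul_nonneg (by positivity) ?_) ?_
    · exact setIntegral_nonneg measurableSet_box fun x _ => nsq_nonneg _
    · exact setIntegral_nonneg measurableSet_box fun x _ => abs_nonneg _
  have hnn2 : 0 ≤ (2*π)⁻¹ * (∫ x in box, nsq (W x))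
      + (∫ x in box, |pd 1 (fun y => nsq (W y)) x|) := by
    refine add_nonneg (mul_nonneg (by positivity) ?_) ?_
    · exact setIntegral_nonneg measurableSet_box fun x _ => nsq_nonneg _
    · exact setIntegral_nonneg measurableSet_box fun x _ => abs_nonneg _
  have step2 := prod_bound (fun x => nsq (U x)) (fun x => nsq (W x)) hφ hψ
    (fun x => nsq_nonneg _) (fun x => nsq_nonneg _)
  calc (∫ x in box, nsq (cross (U x) (W x)))
      ≤ ∫ x in box, nsq (U x) * nsq (W x) := step1
    _ ≤ ((2*π)⁻¹ * (∫ x in box, nsq (U x)) + (∫ x in box, |pd 0 (fun y => nsq (U y)) x|))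
        * ((2*π)⁻¹ * (∫ x in box, nsq (W x)) + (∫ x in box, |pd 1 (fun y => nsq (W y)) x|)) :=
        step2
    _ ≤ (2 * Cb) * (2 * Cb) := mul_le_mul hb1 hb2 hnn2 (by linarith)
    _ = 4 * Cb^2 := by ring

end NSMaux
theorem statement17 (T C : ℝ) (hT : 0 < T) (hC : 0 < C)
    (u B E : ℝ → ℝ → Pt → Fin 3 → ℝ) (q : ℝ → ℝ → Pt → ℝ)
    (hsol : ∀ ε > (0 : ℝ), IsNSM ε T (u ε) (B ε) (E ε) (q ε))
    (hH1 : ∀ ε > (0 : ℝ), ∀ t ∈ Set.Ico (0 : ℝ) T, H1n (u ε t) + H1n (B ε t) ≤ C)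
    (hj : ∀ ε > (0 : ℝ),
      (∫ t in Set.Ioc (0 : ℝ) T, L2sq (fun x => jcur (u ε) (B ε) (E ε) t x)) ≤ C)
    (hE1 : ∀ ε > (0 : ℝ), ∀ t ∈ Set.Ioo (0 : ℝ) T, ∃ e',
      HasDerivAt (En1 ε (u ε) (B ε) (E ε)) e' t ∧ e' + Dis1 ε (u ε) (B ε) (E ε) t ≤ 0)
    (hE10 : ∀ ε > (0 : ℝ), En1 ε (u ε) (B ε) (E ε) 0 ≤ C) :
    ∃ C' > (0 : ℝ), ∀ ε > (0 : ℝ),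
      ε * (∫ t in Set.Ioc (0 : ℝ) T, L2sq (fun x => dt (B ε) t x)) ≤ C' ∧
      (∫ t in Set.Ioc (0 : ℝ) T, L2sq (E ε t)) ≤ C' := by
  classical
  refine ⟨2*C + 8*C^4*T + 1, by positivity, ?_⟩
  intro ε hε
  have hCC' : C ≤ 2*C + 8*C^4*T + 1 := by nlinarith [mul_pos (pow_pos hC 4) hT]
  obtain ⟨hu, hB, hE, -, -, -⟩ := hsol ε hε
  have hRu := NSMaux.reg_of_smooth hu
  have hRB := NSMaux.reg_of_smooth hB
  have hRE := NSMaux.reg_of_smooth hE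
  -- joint continuity of the various integrands
  have hjg : ContinuousOn (fun p : ℝ × Pt => nsq (dt (B ε) p.1 p.2)) (NSMaux.Sdom T) :=
    NSMaux.continuous_nsq.comp_continuousOn hRB.jdt
  have hjgE : ContinuousOn (fun p : ℝ × Pt => nsq (dt (E ε) p.1 p.2)) (NSMaux.Sdom T) :=
    NSMaux.continuous_nsq.comp_continuousOn hRE.jdt
  have hgsqu : ContinuousOn (fun p : ℝ × Pt => gsq (u ε p.1) p.2) (NSMaux.Sdom T) :=
    (NSMaux.continuous_nsq.comp_continuousOn (hRu.jpd 0)).add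
      (NSMaux.continuous_nsq.comp_continuousOn (hRu.jpd 1))
  have hgsqB : ContinuousOn (fun p : ℝ × Pt => gsq (B ε p.1) p.2) (NSMaux.Sdom T) :=
    (NSMaux.continuous_nsq.comp_continuousOn (hRB.jpd 0)).add
      (NSMaux.continuous_nsq.comp_continuousOn (hRB.jpd 1))
  have hjD1 : ContinuousOn (fun p : ℝ × Pt =>
      ε^2 * nsq (dt (E ε) p.1 p.2) + gsq (u ε p.1) p.2 / 2 + gsq (B ε p.1) p.2 / 2
        + ε * nsq (dt (B ε) p.1 p.2)) (NSMaux.Sdom T) :=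
    (((hjgE.const_smul (ε^2)).add (hgsqu.div_const 2)).add (hgsqB.div_const 2)).add
      (hjg.const_smul ε)
  have hjE1 : ContinuousOn (fun p : ℝ × Pt =>
      nsq (u ε p.1 p.2) / 2 + nsq (B ε p.1 p.2 + (2*ε) • dt (B ε) p.1 p.2) / 2
        + 3*ε*gsq (B ε p.1) p.2 + ε^2 * nsq (dt (B ε) p.1 p.2)
        + ε * nsq (E ε p.1 p.2) / 2) (NSMaux.Sdom T) := by
    refine ContinuousOn.add (ContinuousOn.add (ContinuousOn.add (ContinuousOn.add
      ((NSMaux.continuous_nsq.comp_continuousOn hRu.jc).div_const 2) ?_)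
      (hgsqB.const_smul (3*ε))) (hjg.const_smul (ε^2))) ?_
    · exact (NSMaux.continuous_nsq.comp_continuousOn
        (hRB.jc.add (hRB.jdt.const_smul (2*ε)))).div_const 2
    · exact ((NSMaux.continuous_nsq.comp_continuousOn hRE.jc).const_smul ε).div_const 2
  -- parametric continuity
  have hgc : ContinuousOn (fun t => L2sq (fun x => dt (B ε) t x)) (Set.Ico (0:ℝ) T) :=
    NSMaux.contOn_intBox hjg
  have hEn1c : ContinuousOn (En1 ε (u ε) (B ε) (E ε)) (Set.Ico (0:ℝ) T) :=
    NSMaux.contOn_intBox hjE1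
  -- slice integrability
  have ibox : ∀ {Φ : ℝ × Pt → ℝ}, ContinuousOn Φ (NSMaux.Sdom T) → ∀ {t : ℝ},
      t ∈ Set.Ico (0:ℝ) T → IntegrableOn (fun x => Φ (t, x)) box volume :=
    fun {Φ} hΦ {t} ht =>
      ((NSMaux.sliceCont hΦ ht).continuousOn).integrableOn_compact NSMaux.isCompact_box
  -- pointwise comparison ε ‖∂ₜB‖² ≤ 𝓓₁
  have key1 : ∀ t ∈ Set.Ico (0:ℝ) T,
      ε * L2sq (fun x => dt (B ε) t x) ≤ Dis1 ε (u ε) (B ε) (E ε) t := by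
    intro t ht
    have h1 : ε * L2sq (fun x => dt (B ε) t x) = ∫ x in box, ε * nsq (dt (B ε) t x) := by
      rw [integral_const_mul]; rfl
    rw [h1]
    refine setIntegral_mono_on (ibox (hjg.const_smul ε) ht) (ibox hjD1 ht)
      NSMaux.measurableSet_box ?_
    intro x _
    have n1 := NSMaux.nsq_nonneg (dt (E ε) t x)
    have n2 := NSMaux.gsq_nonneg (u ε t) x
    have n3 := NSMaux.gsq_nonneg (B ε t) x
    have n4 : 0 ≤ ε^2 * nsq (dt (E ε) t x) := mul_nonneg (sq_nonneg ε) n1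
    linarith
  -- derivative facts
  have hDer : ∀ t ∈ Set.Ioo (0:ℝ) T,
      HasDerivAt (En1 ε (u ε) (B ε) (E ε)) (deriv (En1 ε (u ε) (B ε) (E ε)) t) t ∧
      deriv (En1 ε (u ε) (B ε) (E ε)) t + Dis1 ε (u ε) (B ε) (E ε) t ≤ 0 := by
    intro t ht
    obtain ⟨e', h1, h2⟩ := hE1 ε hε t ht
    have he : deriv (En1 ε (u ε) (B ε) (E ε)) t = e' := h1.deriv
    rw [he]; exact ⟨h1, h2⟩
  -- nonnegativity of the energy
  have hEn1nn : ∀ t : ℝ, 0 ≤ En1 ε (u ε) (B ε) (E ε) t := by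
    intro t
    refine setIntegral_nonneg NSMaux.measurableSet_box fun x _ => ?_
    have n1 := NSMaux.nsq_nonneg (u ε t x)
    have n2 := NSMaux.nsq_nonneg (B ε t x + (2*ε) • dt (B ε) t x)
    have n3 := NSMaux.gsq_nonneg (B ε t) x
    have n4 := NSMaux.nsq_nonneg (dt (B ε) t x)
    have n5 := NSMaux.nsq_nonneg (E ε t x)
    have m3 : 0 ≤ 3*ε*gsq (B ε t) x := by positivity
    have m4 : 0 ≤ ε^2 * nsq (dt (B ε) t x) := mul_nonneg (sq_nonneg ε) n4
    have m5 : 0 ≤ ε * nsq (E ε t x) := mul_nonneg hε.le n5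
    linarith
  -- energy inequality on [0, b]
  have boundb : ∀ b : ℝ, 0 < b → b < T →
      ε * (∫ t in Set.Ioc (0:ℝ) b, L2sq (fun x => dt (B ε) t x)) ≤ C := by
    intro b hb0 hbT
    have hsub : Set.Icc (0:ℝ) b ⊆ Set.Ico (0:ℝ) T :=
      fun s hs => ⟨hs.1, lt_of_le_of_lt hs.2 hbT⟩
    have hφcont : ContinuousOn (fun t => ε * L2sq (fun x => dt (B ε) t x))
        (Set.Icc (0:ℝ) b) := continuousOn_const.mul (hgc.mono hsub)
    have hFTC := intervalIntegral.integral_le_sub_of_hasDeriv_right_of_le (a := 0) (b := b)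
      (g := fun t => -(En1 ε (u ε) (B ε) (E ε) t))
      (g' := fun t => -(deriv (En1 ε (u ε) (B ε) (E ε)) t))
      (φ := fun t => ε * L2sq (fun x => dt (B ε) t x))
      hb0.le ((hEn1c.mono hsub).neg)
      (fun t ht => (((hDer t ⟨ht.1, ht.2.trans hbT⟩).1).neg).hasDerivWithinAt)
      (hφcont.integrableOn_compact isCompact_Icc)
      (fun t ht => by
        have h1 := key1 t ⟨ht.1.le, ht.2.trans hbT⟩
        have h2 := (hDer t ⟨ht.1, ht.2.trans hbT⟩).2
        linarith)
    rw [intervalIntegral.integral_of_le hb0.le] at hFTC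
    have h3 : (∫ t in Set.Ioc (0:ℝ) b, ε * L2sq (fun x => dt (B ε) t x))
        = ε * ∫ t in Set.Ioc (0:ℝ) b, L2sq (fun x => dt (B ε) t x) := integral_const_mul ε _
    rw [h3] at hFTC
    simp only [neg_sub_neg] at hFTC
    have h4 := hE10 ε hε
    have h5 := hEn1nn b
    linarith
  constructor
  · -- first estimate
    by_cases hIg : IntegrableOn (fun t => L2sq (fun x => dt (B ε) t x)) (Set.Ioc (0:ℝ) T)
    · set seqb : ℕ → ℝ := fun n => T - T/((n:ℝ)+2) with hseq
      have hb0 : ∀ n, 0 < seqb n := by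
        intro n
        have h1 : (1:ℝ) < (n:ℝ) + 2 := by
          have : (0:ℝ) ≤ (n:ℝ) := Nat.cast_nonneg n
          linarith
        have h2 : T/((n:ℝ)+2) < T := div_lt_self hT h1
        simp only [hseq]
        linarith
      have hbT : ∀ n, seqb n < T := by
        intro n
        have : 0 < T/((n:ℝ)+2) := by positivity
        simp only [hseq]
        linarith
      have hmono : Monotone (fun n => Set.Ioc (0:ℝ) (seqb n)) := by
        intro m n hmn
        apply Set.Ioc_subset_Ioc le_rfl
        have h1 : ((m:ℝ)+2) ≤ ((n:ℝ)+2) := by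
          have : (m:ℝ) ≤ (n:ℝ) := Nat.cast_le.2 hmn
          linarith
        have h2 : T/((n:ℝ)+2) ≤ T/((m:ℝ)+2) :=
          div_le_div_of_nonneg_left hT.le (by positivity) h1
        simp only [hseq]
        linarith
      have hunion : (⋃ n, Set.Ioc (0:ℝ) (seqb n)) = Set.Ioo (0:ℝ) T := by
        ext t
        simp only [Set.mem_iUnion, Set.mem_Ioc, Set.mem_Ioo]
        constructor
        · rintro ⟨n, h1, h2⟩
          exact ⟨h1, lt_of_le_of_lt h2 (hbT n)⟩
        · rintro ⟨h1, h2⟩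
          obtain ⟨n, hn⟩ := exists_nat_gt (T / (T - t))
          refine ⟨n, h1, ?_⟩
          have hTt : 0 < T - t := by linarith
          have hn2 : T / (T - t) < (n:ℝ) + 2 := by
            have : (0:ℝ) ≤ (n:ℝ) := Nat.cast_nonneg n
            linarith
          have h6 : T < ((n:ℝ) + 2) * (T - t) := by
            rw [div_lt_iff₀ hTt] at hn2
            linarith
          have h7 : T/((n:ℝ)+2) < T - t := by
            rw [div_lt_iff₀ (by positivity : (0:ℝ) < (n:ℝ)+2)]
            nlinarith
          simp only [hseq]
          linarith
      have htend := tendsto_setIntegral_of_monotone (fun n => measurableSet_Ioc) hmono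
        (hIg.mono_set (by rw [hunion]; exact Set.Ioo_subset_Ioc_self))
      rw [hunion] at htend
      have hlim : (∫ t in Set.Ioo (0:ℝ) T, L2sq (fun x => dt (B ε) t x)) ≤ C / ε := by
        refine le_of_tendsto htend (Filter.Eventually.of_forall fun n => ?_)
        have hbb := boundb (seqb n) (hb0 n) (hbT n)
        rw [le_div_iff₀ hε]
        nlinarith
      rw [integral_Ioc_eq_integral_Ioo]
      have h7 := mul_le_mul_of_nonneg_left hlim hε.le
      have h8 : ε * (C/ε) = C := by field_simp
      rw [h8] at h7
      linarith
    · rw [MeasureTheory.integral_undef hIg]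
      simp only [mul_zero]
      positivity
  · -- second estimate
    have hjE : ContinuousOn (fun p : ℝ × Pt => nsq (E ε p.1 p.2)) (NSMaux.Sdom T) :=
      NSMaux.continuous_nsq.comp_continuousOn hRE.jc
    have hjcross : ContinuousOn (fun p : ℝ × Pt => cross (u ε p.1 p.2) (B ε p.1 p.2))
        (NSMaux.Sdom T) :=
      NSMaux.continuous_cross.comp_continuousOn (hRu.jc.prodMk hRB.jc)
    have hjcrossn : ContinuousOn (fun p : ℝ × Pt => nsq (cross (u ε p.1 p.2) (B ε p.1 p.2)))
        (NSMaux.Sdom T) := NSMaux.continuous_nsq.comp_continuousOn hjcross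
    have hjj : ContinuousOn (fun p : ℝ × Pt => nsq (jcur (u ε) (B ε) (E ε) p.1 p.2))
        (NSMaux.Sdom T) :=
      NSMaux.continuous_nsq.comp_continuousOn (hRE.jc.add hjcross)
    have hjqc : ContinuousOn (fun t => L2sq (fun x => jcur (u ε) (B ε) (E ε) t x))
        (Set.Ico (0:ℝ) T) := NSMaux.contOn_intBox hjj
    have hcrossK : ∀ t ∈ Set.Ioo (0:ℝ) T,
        (∫ x in box, nsq (cross (u ε t x) (B ε t x))) ≤ 4 * (C^2)^2 := by
      intro t ht
      have hH := hH1 ε hε t (Set.Ioo_subset_Ico_self ht)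
      have hBnn : 0 ≤ H1n (B ε t) := Real.sqrt_nonneg _
      have hunn : 0 ≤ H1n (u ε t) := Real.sqrt_nonneg _
      have hu1 : H1n (u ε t) ≤ C := by linarith
      have hB1 : H1n (B ε t) ≤ C := by linarith
      exact NSMaux.cross_L2_bound _ _ (NSMaux.slice_contDiff hu ht)
        (NSMaux.slice_contDiff hB ht) (NSMaux.H1sq_le_sq hu1) (NSMaux.H1sq_le_sq hB1)
    have hhb : ∀ t ∈ Set.Ioo (0:ℝ) T, L2sq (E ε t)
        ≤ 2 * L2sq (fun x => jcur (u ε) (B ε) (E ε) t x) + 8 * C^4 := by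
      intro t ht
      have hts : t ∈ Set.Ico (0:ℝ) T := Set.Ioo_subset_Ico_self ht
      have i1 : IntegrableOn (fun x => nsq (E ε t x)) box volume := ibox hjE hts
      have i2 : IntegrableOn (fun x => nsq (jcur (u ε) (B ε) (E ε) t x)) box volume :=
        ibox hjj hts
      have i3 : IntegrableOn (fun x => nsq (cross (u ε t x) (B ε t x))) box volume :=
        ibox hjcrossn hts
      have step : L2sq (E ε t) ≤ ∫ x in box,
          (2 * nsq (jcur (u ε) (B ε) (E ε) t x) + 2 * nsq (cross (u ε t x) (B ε t x))) := by
        refine setIntegral_mono_on i1 ((i2.const_mul 2).add (i3.const_mul 2))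
          NSMaux.measurableSet_box ?_
        intro x _
        have hEeq : E ε t x = jcur (u ε) (B ε) (E ε) t x - cross (u ε t x) (B ε t x) := by
          simp only [jcur]
          abel
        calc nsq (E ε t x)
            = nsq (jcur (u ε) (B ε) (E ε) t x - cross (u ε t x) (B ε t x)) := by rw [← hEeq]
          _ ≤ _ := NSMaux.nsq_sub_le _ _
      rw [integral_add (i2.const_mul 2) (i3.const_mul 2), integral_const_mul,
        integral_const_mul] at step
      have h9 := hcrossK t ht
      have h10 : (4:ℝ) * (C^2)^2 = 4 * C^4 := by ring
      rw [h10] at h9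
      calc L2sq (E ε t) ≤ 2 * (∫ x in box, nsq (jcur (u ε) (B ε) (E ε) t x))
            + 2 * ∫ x in box, nsq (cross (u ε t x) (B ε t x)) := step
        _ ≤ 2 * L2sq (fun x => jcur (u ε) (B ε) (E ε) t x) + 8 * C^4 := by
            have : (∫ x in box, nsq (jcur (u ε) (B ε) (E ε) t x))
                = L2sq (fun x => jcur (u ε) (B ε) (E ε) t x) := rfl
            rw [this]
            linarith
    have hjb : ∀ t ∈ Set.Ioo (0:ℝ) T, L2sq (fun x => jcur (u ε) (B ε) (E ε) t x)
        ≤ 2 * L2sq (E ε t) + 8 * C^4 := by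
      intro t ht
      have hts : t ∈ Set.Ico (0:ℝ) T := Set.Ioo_subset_Ico_self ht
      have i1 : IntegrableOn (fun x => nsq (E ε t x)) box volume := ibox hjE hts
      have i2 : IntegrableOn (fun x => nsq (jcur (u ε) (B ε) (E ε) t x)) box volume :=
        ibox hjj hts
      have i3 : IntegrableOn (fun x => nsq (cross (u ε t x) (B ε t x))) box volume :=
        ibox hjcrossn hts
      have step : L2sq (fun x => jcur (u ε) (B ε) (E ε) t x) ≤ ∫ x in box,
          (2 * nsq (E ε t x) + 2 * nsq (cross (u ε t x) (B ε t x))) := by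
        refine setIntegral_mono_on i2 ((i1.const_mul 2).add (i3.const_mul 2))
          NSMaux.measurableSet_box ?_
        intro x _
        calc nsq (jcur (u ε) (B ε) (E ε) t x)
            = nsq (E ε t x + cross (u ε t x) (B ε t x)) := rfl
          _ ≤ _ := NSMaux.nsq_add_le _ _
      rw [integral_add (i1.const_mul 2) (i3.const_mul 2), integral_const_mul,
        integral_const_mul] at step
      have h9 := hcrossK t ht
      have h10 : (4:ℝ) * (C^2)^2 = 4 * C^4 := by ring
      rw [h10] at h9
      have h11 : (∫ x in box, nsq (E ε t x)) = L2sq (E ε t) := rfl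
      rw [h11] at step
      linarith
    by_cases hIE : IntegrableOn (fun t => L2sq (E ε t)) (Set.Ioc (0:ℝ) T)
    · have hIE' : IntegrableOn (fun t => L2sq (E ε t)) (Set.Ioo (0:ℝ) T) :=
        hIE.mono_set Set.Ioo_subset_Ioc_self
      have hjm : AEStronglyMeasurable (fun t => L2sq (fun x => jcur (u ε) (B ε) (E ε) t x))
          (volume.restrict (Set.Ioo (0:ℝ) T)) :=
        (hjqc.mono Set.Ioo_subset_Ico_self).aestronglyMeasurable measurableSet_Ioo
      have hIconst : IntegrableOn (fun _ : ℝ => (8:ℝ) * C^4) (Set.Ioo (0:ℝ) T) volume :=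
        integrableOn_const (by rw [Real.volume_Ioo]; exact ENNReal.ofReal_ne_top)
      have hIjq : IntegrableOn (fun t => L2sq (fun x => jcur (u ε) (B ε) (E ε) t x))
          (Set.Ioo (0:ℝ) T) volume := by
        refine Integrable.mono' ((hIE'.const_mul 2).add hIconst) hjm ?_
        filter_upwards [ae_restrict_mem measurableSet_Ioo] with t ht
        rw [Real.norm_eq_abs, abs_of_nonneg (NSMaux.L2sq_nonneg _)]
        exact hjb t ht
      have hjval : (∫ t in Set.Ioo (0:ℝ) T, L2sq (fun x => jcur (u ε) (B ε) (E ε) t x)) ≤ C := by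
        rw [← integral_Ioc_eq_integral_Ioo]
        exact hj ε hε
      have step : (∫ t in Set.Ioo (0:ℝ) T, L2sq (E ε t)) ≤ ∫ t in Set.Ioo (0:ℝ) T,
          (2 * L2sq (fun x => jcur (u ε) (B ε) (E ε) t x) + 8 * C^4) :=
        setIntegral_mono_on hIE' ((hIjq.const_mul 2).add hIconst)
          measurableSet_Ioo (fun t ht => hhb t ht)
      rw [integral_add (hIjq.const_mul 2) hIconst, integral_const_mul, setIntegral_const,
        measureReal_def, Real.volume_Ioo, ENNReal.toReal_ofReal (by linarith : (0:ℝ) ≤ T - 0),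
        smul_eq_mul] at step
      rw [integral_Ioc_eq_integral_Ioo]
      nlinarith [step, hjval]
    · rw [MeasureTheory.integral_undef hIE]
      positivity
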